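/- arXiv:cond-mat/0307460 — 3 statements merged into one kernel-verified Lean document; each statement's English description precedes it below -/
import Mathlib

section
/- If μ ∈ (0,1) and e₊ − e₋ is not an integer multiple of 2π, then r := |1 − μ + μ e^{i(e₊−e₋)}| < 1, and consequently ‖m⃗_t − m⃗_e‖ ≤ C r^t for some constant C (depending on m⃗_0, m⃗_e, h⃗), so m⃗_t → m⃗_e exponentially fast as t → ∞. -/
/-!
The factor `z = (1 - μ) • 1 + μ • e^{2ih}` is a convex combination with positive weights of two
distinct points of the closed unit disc, so `‖z‖ < 1` by strict convexity of `ℂ`. Each component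
of `m⃗_t - m⃗_e` is `Re (c_i z^t)` for a fixed `c ∈ ℂ³`, hence bounded by `‖c‖ ‖z‖^t`.
-/

open scoped BigOperators
open Matrix Filter
open scoped ComplexOrder

noncomputable section

/-- 2×2 complex matrices: single-site operators. -/
abbrev Mat2 := Matrix (Fin 2) (Fin 2) ℂ

/-- Operators on the `N`-site Hilbert space `⊗_{j=1}^N ℂ²`, identified with
matrices indexed by configurations `Fin N → Fin 2`. -/
abbrev MatN (N : ℕ) := Matrix (Fin N → Fin 2) (Fin N → Fin 2) ℂ

/-- Pauli matrices. -/
def σx : Mat2 := !![0, 1; 1, 0]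
def σy : Mat2 := !![0, -Complex.I; Complex.I, 0]
def σz : Mat2 := !![1, 0; 0, -1]
def pauli : Fin 3 → Mat2 := ![σx, σy, σz]

/-- `m⃗ · σ⃗` for a real vector `m⃗ ∈ ℝ³`. -/
def dotPauli (m : Fin 3 → ℝ) : Mat2 := ∑ i, (m i : ℂ) • pauli i

/-- Euclidean norm on ℝ³. -/
def norm3 (v : Fin 3 → ℝ) : ℝ := Real.sqrt (∑ i, (v i) ^ 2)

/-- dot product on ℝ³. -/
def dot3 (u v : Fin 3 → ℝ) : ℝ := ∑ i, u i * v i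

/-- tensor product `⊗_j B j` of single-site matrices. -/
def tens {N : ℕ} (B : Fin N → Mat2) : MatN N := fun η η' => ∏ j, B j (η j) (η' j)

/-- `B_j = 𝟙 ⊗ ⋯ ⊗ B ⊗ ⋯ ⊗ 𝟙` with `B` at site `j`. -/
def site (N : ℕ) (j : Fin N) (B : Mat2) : MatN N :=
  tens (Function.update (fun _ => (1 : Mat2)) j B)

/-- `B_N = ∑_j B_j`. -/
def sumSite (N : ℕ) (B : Mat2) : MatN N := ∑ j, site N j B

/-- partial trace onto site `j` (reduced density matrix at site `j`). -/
def ptrace {N : ℕ} (j : Fin N) (ρ : MatN N) : Mat2 :=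
  fun a b => ∑ η : Fin N → Fin 2, if η j = a then ρ η (Function.update η j b) else 0

/-- functional calculus `f(M)` for a Hermitian matrix `M` (junk value `0` otherwise). -/
def matFun {n : Type*} [Fintype n] [DecidableEq n] (f : ℝ → ℝ) (M : Matrix n n ℂ) :
    Matrix n n ℂ :=
  if hM : M.IsHermitian then
    (hM.eigenvectorUnitary : Matrix n n ℂ) *
      Matrix.diagonal (fun i => (f (hM.eigenvalues i) : ℂ)) *
        (hM.eigenvectorUnitary : Matrix n n ℂ)ᴴ
  else 0

/-- `k_j(ε,t) = ∑_{n=1}^t ε_{(j-n) mod N}`. -/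
def kSteps (N t : ℕ) (ε : Fin N → Fin 2) (j : Fin N) : ℕ :=
  ∑ n ∈ Finset.Icc 1 t, (ε ⟨((j : ℕ) + n * (N - 1)) % N, Nat.mod_lt _ j.pos⟩ : ℕ)

/-- the unitary dynamics `U_N(t,ε) = ⊗_j U^{k_j(ε,t)}`. -/
def UN (U : Mat2) (N t : ℕ) (ε : Fin N → Fin 2) : MatN N :=
  tens (fun j => U ^ kSteps N t ε j)

/-- the set `Ω_μ^N` of scatterer configurations with `⌈μN⌉` active scatterers. -/
def OmegaSet (N : ℕ) (μ : ℝ) : Finset (Fin N → Fin 2) :=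
  Finset.univ.filter (fun ε => (∑ j, (ε j : ℕ)) = Nat.ceil (μ * N))

/-- expectation `E_μ^N` with respect to the uniform probability on `Ω_μ^N`. -/
def epsAvg (N : ℕ) (μ : ℝ) (g : (Fin N → Fin 2) → ℝ) : ℝ :=
  (∑ ε ∈ OmegaSet N μ, g ε) / (OmegaSet N μ).card

/-- the single site Hamiltonian `H = h⃗ · σ⃗`. -/
def Hmat (hv : Fin 3 → ℝ) : Mat2 := dotPauli hv

/-- `U = exp(iH)`. -/
def Umat (hv : Fin 3 → ℝ) : Mat2 := NormedSpace.exp (Complex.I • Hmat hv)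

/-- `z = 1 - μ + μ e^{i(e₊ - e₋)}` with `e₊ - e₋ = 2h`. -/
def zfac (h μ : ℝ) : ℂ := 1 - μ + μ * Complex.exp (Complex.I * (2 * h))

/-- the magnetization `m⃗_t = m⃗_e + Re[(m⃗_0 - m⃗_e + i(h⃗ × m⃗_0)/h) z^t]`, with `m⃗_e = e h⃗/h²`. -/
def mVec (hv m0 : Fin 3 → ℝ) (e μ : ℝ) (t : ℕ) (i : Fin 3) : ℝ :=
  e * hv i / (norm3 hv) ^ 2 +
    (((m0 i - e * hv i / (norm3 hv) ^ 2 : ℝ) +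
        Complex.I * ((crossProduct hv m0) i / norm3 hv)) *
      (zfac (norm3 hv) μ) ^ t).re

/-- the Heisenberg-picture effective map `Γ(A) = (1-μ)A + μ U* A U`. -/
def Gam (U : Mat2) (μ : ℝ) (A : Mat2) : Mat2 := (1 - μ) • A + μ • (Uᴴ * A * U)

/-- the Schrödinger-picture effective map `Γ*(ν) = (1-μ)ν + μ U ν U*`. -/
def GamS (U : Mat2) (μ : ℝ) (ν : Mat2) : Mat2 := (1 - μ) • ν + μ • (U * ν * Uᴴ)

/-- the density matrix with Bloch vector `m⃗`: `(𝟙 + m⃗·σ⃗)/2`. -/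
def bloch (m : Fin 3 → ℝ) : Mat2 := (2 : ℂ)⁻¹ • (1 + dotPauli m)


open Complex in
theorem Complex.exp_I_mul_ne_one {θ : ℝ} (hθ : ∀ k : ℤ, θ ≠ k * (2 * Real.pi)) :
    exp (I * θ) ≠ 1 := by
  rw [Ne, exp_eq_one_iff]
  rintro ⟨k, hk⟩
  apply hθ k
  have hθk : (θ : ℂ) = k * (2 * Real.pi) := by
    apply mul_left_cancel₀ I_ne_zero
    rw [hk]; ring
  exact_mod_cast hθk

theorem norm_one_sub_add_mul_lt_one {μ : ℝ} (hμ : μ ∈ Set.Ioo (0 : ℝ) 1) {w : ℂ}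
    (hw : ‖w‖ ≤ 1) (hw1 : w ≠ 1) : ‖1 - μ + μ * w‖ < 1 := by
  simpa [Complex.real_smul] using norm_combo_lt_of_ne (norm_one (α := ℂ)).le hw hw1.symm
    (sub_pos.2 hμ.2) hμ.1 (sub_add_cancel 1 μ)

theorem norm_zfac_lt_one {h μ : ℝ} (hμ : μ ∈ Set.Ioo (0 : ℝ) 1)
    (hres : ∀ k : ℤ, 2 * h ≠ k * (2 * Real.pi)) : ‖zfac h μ‖ < 1 := by
  have hθ : Complex.I * (2 * h) = Complex.I * ((2 * h : ℝ) : ℂ) := by push_cast; ring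
  rw [zfac, hθ]
  exact norm_one_sub_add_mul_lt_one hμ (Complex.norm_exp_I_mul_ofReal _).le
    (Complex.exp_I_mul_ne_one hres)

theorem sqrt_sum_sq_re_mul_le {ι : Type*} [Fintype ι] (c : ι → ℂ) (w : ℂ) :
    Real.sqrt (∑ i, (c i * w).re ^ 2) ≤ Real.sqrt (∑ i, ‖c i‖ ^ 2) * ‖w‖ := by
  rw [← Real.sqrt_sq (norm_nonneg w), ← Real.sqrt_mul (by positivity), Finset.sum_mul]
  refine Real.sqrt_le_sqrt (Finset.sum_le_sum fun i _ => ?_)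
  rw [← mul_pow, ← norm_mul]
  exact sq_le_sq' (abs_le.1 (Complex.abs_re_le_norm _)).1 (Complex.re_le_norm _)

theorem kac_exponential_relaxation_general
    (hv : Fin 3 → ℝ) (μ : ℝ) (hμ : μ ∈ Set.Ioo (0 : ℝ) 1)
    (hres : ∀ k : ℤ, 2 * norm3 hv ≠ k * (2 * Real.pi))
    (m0 : Fin 3 → ℝ) (e : ℝ) :
    ‖zfac (norm3 hv) μ‖ < 1 ∧
      ∃ C : ℝ, ∀ t : ℕ,
        norm3 (fun i => mVec hv m0 e μ t i - e * hv i / (norm3 hv) ^ 2) ≤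
          C * (‖zfac (norm3 hv) μ‖) ^ t := by
  set c : Fin 3 → ℂ := fun i => ((m0 i - e * hv i / norm3 hv ^ 2 : ℝ) : ℂ) +
    Complex.I * (crossProduct hv m0 i / norm3 hv)
  refine ⟨norm_zfac_lt_one hμ hres, Real.sqrt (∑ i, ‖c i‖ ^ 2), fun t => ?_⟩
  have hm : (fun i => mVec hv m0 e μ t i - e * hv i / norm3 hv ^ 2) =
      fun i => (c i * zfac (norm3 hv) μ ^ t).re :=
    funext fun i => add_sub_cancel_left _ _
  rw [hm, norm3, ← norm_pow]
  exact sqrt_sum_sq_re_mul_le c _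

/-- If `μ ∈ (0,1)` and `e₊ − e₋ = 2h` is not an integer multiple of `2π`,
then `r = |1 − μ + μ e^{i(e₊−e₋)}| < 1`, and `‖m⃗_t − m⃗_e‖ ≤ C rᵗ` for some constant `C`,
so `m⃗_t → m⃗_e` exponentially fast. -/
theorem kac_exponential_relaxation
    (hv : Fin 3 → ℝ) (hhv : hv ≠ 0) (μ : ℝ) (hμ : μ ∈ Set.Ioo (0 : ℝ) 1)
    (hres : ∀ k : ℤ, 2 * norm3 hv ≠ k * (2 * Real.pi))
    (m0 : Fin 3 → ℝ) (hm0 : norm3 m0 ≤ 1) (e : ℝ) :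
    ‖zfac (norm3 hv) μ‖ < 1 ∧
      ∃ C : ℝ, ∀ t : ℕ,
        norm3 (fun i => mVec hv m0 e μ t i - e * hv i / (norm3 hv) ^ 2) ≤
          C * (‖zfac (norm3 hv) μ‖) ^ t :=
  kac_exponential_relaxation_general hv μ hμ hres m0 e

end
end

section
/- Assume ‖m⃗_0‖ ≤ 1. Then for every t ∈ ℕ, ‖m⃗_t‖ ≤ 1, the matrix ν_t := (𝟙 + m⃗_t·σ⃗)/2 is a density matrix whose eigenvalues are (1+‖m⃗_t‖)/2 and (1−‖m⃗_t‖)/2, and its von Neumann entropy S[ν_t] := −Σ_{λ eigenvalue of ν_t} λ log λ (with the convention 0 log 0 := 0) equals s(t) := −((1+‖m⃗_t‖)/2) log((1+‖m⃗_t‖)/2) − ((1−‖m⃗_t‖)/2) log((1−‖m⃗_t‖)/2). -/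
/-! The Bloch matrix `(𝟙 + m⃗·σ⃗)/2` has characteristic polynomial
`(x - (1 + ‖m⃗‖)/2) (x - (1 - ‖m⃗‖)/2)`; its spectrum, its positivity for `‖m⃗‖ ≤ 1` and its
entropy are read off from these two eigenvalues, which sum to the trace `1`.

It remains to see `‖m⃗_t‖ ≤ ‖m⃗_0‖`. Writing `z^t = a + i b`, we have `m⃗_t = m⃗_e + a p⃗ - b q⃗` with
`p⃗ = m⃗_0 - m⃗_e` and `q⃗ = (h⃗ × m⃗_0)/h`. The vectors `m⃗_e ∥ h⃗`, `p⃗`, `q⃗` are pairwise orthogonal and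
`‖p⃗‖ = ‖q⃗‖` (Lagrange's identity), so `‖m⃗_t‖² = ‖m⃗_e‖² + |z|^{2t} ‖p⃗‖² ≤ ‖m⃗_e‖² + ‖p⃗‖² = ‖m⃗_0‖²`,
because `z` is a convex combination of `1` and a point of the unit circle. -/

open scoped BigOperators
open Matrix Filter
open scoped ComplexOrder

noncomputable section

/-- von Neumann entropy `S[ν] = −∑_λ λ log λ` (sum over eigenvalues with multiplicity),
with the convention `0 log 0 = 0` (automatic since `Real.log 0 = 0`). -/
def vnEntropy (ν : Mat2) : ℝ :=
  if hν : ν.IsHermitian then -∑ i, hν.eigenvalues i * Real.log (hν.eigenvalues i) else 0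

/-- the entropy function `s(x) = −((1+x)/2) log((1+x)/2) − ((1−x)/2) log((1−x)/2)`. -/
def entFun (x : ℝ) : ℝ :=
  -((1 + x) / 2 * Real.log ((1 + x) / 2)) - (1 - x) / 2 * Real.log ((1 - x) / 2)

lemma bloch_eq_fin_two (m : Fin 3 → ℝ) :
    bloch m = !![((1 + m 2 : ℝ) : ℂ) / 2, ((m 0 : ℂ) - Complex.I * m 1) / 2;
                 ((m 0 : ℂ) + Complex.I * m 1) / 2, ((1 - m 2 : ℝ) : ℂ) / 2] := by
  ext i j
  fin_cases i <;> fin_cases j <;>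
    simp [bloch, dotPauli, pauli, σx, σy, σz, Fin.sum_univ_three] <;> ring

lemma bloch_isHermitian (m : Fin 3 → ℝ) : (bloch m).IsHermitian := by
  rw [bloch_eq_fin_two]
  ext i j
  fin_cases i <;> fin_cases j <;> simp [Complex.ext_iff]

lemma bloch_trace (m : Fin 3 → ℝ) : (bloch m).trace = 1 := by
  simp only [bloch_eq_fin_two, trace_fin_two, of_apply, cons_val', cons_val_zero, cons_val_one,
    empty_val', cons_val_fin_one, ]
  push_cast
  ring

lemma norm3_eq_sqrt_dotProduct (v : Fin 3 → ℝ) : norm3 v = √(v ⬝ᵥ v) := by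
  simp only [norm3, dotProduct, sq]

lemma norm3_sq (v : Fin 3 → ℝ) : norm3 v ^ 2 = v ⬝ᵥ v := by
  rw [norm3, Real.sq_sqrt (by positivity)]
  simp only [dotProduct, sq]

lemma det_scalar_sub_bloch (m : Fin 3 → ℝ) (z : ℂ) :
    (algebraMap ℂ Mat2 z - bloch m).det =
      (z - (((1 + norm3 m) / 2 : ℝ) : ℂ)) * (z - (((1 - norm3 m) / 2 : ℝ) : ℂ)) := by
  have hr : ((norm3 m : ℂ)) ^ 2 = m 0 ^ 2 + m 1 ^ 2 + m 2 ^ 2 := by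
    exact_mod_cast (norm3_sq m).trans (by simp [dotProduct, Fin.sum_univ_three, sq])
  rw [bloch_eq_fin_two, det_fin_two]
  simp [algebraMap_matrix_apply]
  linear_combination (1 / 4 : ℂ) * hr + Complex.I_sq * ((m 1 : ℂ) ^ 2 / 4)

lemma spectrum_bloch (m : Fin 3 → ℝ) :
    spectrum ℂ (bloch m) = {(((1 + norm3 m) / 2 : ℝ) : ℂ), (((1 - norm3 m) / 2 : ℝ) : ℂ)} := by
  ext z
  rw [spectrum.mem_iff, isUnit_iff_isUnit_det, isUnit_iff_ne_zero, not_not,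
    det_scalar_sub_bloch, mul_eq_zero, sub_eq_zero, sub_eq_zero, Set.mem_insert_iff,
    Set.mem_singleton_iff]

lemma bloch_eigenvalues_mem (m : Fin 3 → ℝ) (i : Fin 2) :
    (bloch_isHermitian m).eigenvalues i = (1 + norm3 m) / 2 ∨
      (bloch_isHermitian m).eigenvalues i = (1 - norm3 m) / 2 := by
  have h := spectrum.algebraMap_mem ℂ ((bloch_isHermitian m).eigenvalues_mem_spectrum_real i)
  rwa [spectrum_bloch, Set.mem_insert_iff, Set.mem_singleton_iff, Complex.coe_algebraMap,
    Complex.ofReal_inj, Complex.ofReal_inj] at h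

lemma bloch_eigenvalues (m : Fin 3 → ℝ) :
    ((bloch_isHermitian m).eigenvalues 0 = (1 + norm3 m) / 2 ∧
      (bloch_isHermitian m).eigenvalues 1 = (1 - norm3 m) / 2) ∨
    ((bloch_isHermitian m).eigenvalues 0 = (1 - norm3 m) / 2 ∧
      (bloch_isHermitian m).eigenvalues 1 = (1 + norm3 m) / 2) := by
  have hsum : (bloch_isHermitian m).eigenvalues 0 + (bloch_isHermitian m).eigenvalues 1 = 1 := by
    have h := (bloch_isHermitian m).trace_eq_sum_eigenvalues
    rw [bloch_trace, Fin.sum_univ_two] at h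
    simpa using (congrArg Complex.re h).symm
  rcases bloch_eigenvalues_mem m 0 with h0 | h0
  · exact Or.inl ⟨h0, by linarith⟩
  · exact Or.inr ⟨h0, by linarith⟩

lemma bloch_posSemidef {m : Fin 3 → ℝ} (hm : norm3 m ≤ 1) : (bloch m).PosSemidef := by
  refine (bloch_isHermitian m).posSemidef_iff_eigenvalues_nonneg.mpr fun i => ?_
  have hr : 0 ≤ norm3 m := Real.sqrt_nonneg _
  rcases bloch_eigenvalues_mem m i with h | h <;> rw [Pi.zero_apply, h] <;> linarith

lemma vnEntropy_bloch (m : Fin 3 → ℝ) : vnEntropy (bloch m) = entFun (norm3 m) := by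
  rw [vnEntropy, dif_pos (bloch_isHermitian m), Fin.sum_univ_two, entFun]
  rcases bloch_eigenvalues m with ⟨h0, h1⟩ | ⟨h0, h1⟩ <;> rw [h0, h1] <;> ring

lemma norm_zfac_le_one (h : ℝ) {μ : ℝ} (hμ : μ ∈ Set.Icc (0 : ℝ) 1) : ‖zfac h μ‖ ≤ 1 := by
  obtain ⟨hμ0, hμ1⟩ := hμ
  calc ‖zfac h μ‖ ≤ ‖((1 - μ : ℝ) : ℂ)‖ + ‖(μ : ℂ)‖ * ‖Complex.exp (Complex.I * (2 * h : ℝ))‖ := by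
        rw [zfac, ← norm_mul]; push_cast; exact norm_add_le _ _
    _ = 1 := by
        rw [Complex.norm_exp_I_mul_ofReal, Complex.norm_of_nonneg (by linarith),
          Complex.norm_of_nonneg hμ0]
        ring

theorem dotProduct_self_add_smul_add_smul {ι R : Type*} [Fintype ι] [CommRing R] {u p q : ι → R}
    (hup : u ⬝ᵥ p = 0) (huq : u ⬝ᵥ q = 0) (hpq : p ⬝ᵥ q = 0) (a b : R) :
    (u + a • p + b • q) ⬝ᵥ (u + a • p + b • q) =
      u ⬝ᵥ u + a ^ 2 * (p ⬝ᵥ p) + b ^ 2 * (q ⬝ᵥ q) := by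
  simp only [add_dotProduct, dotProduct_add, smul_dotProduct, dotProduct_smul, smul_eq_mul,
    dotProduct_comm p u, dotProduct_comm q u, dotProduct_comm q p, hup, huq, hpq]
  ring

lemma dot3_eq_dotProduct (u v : Fin 3 → ℝ) : dot3 u v = u ⬝ᵥ v := rfl

lemma mVec_eq (hv m0 : Fin 3 → ℝ) (e μ : ℝ) (t : ℕ) :
    mVec hv m0 e μ t =
      (e / norm3 hv ^ 2) • hv + (zfac (norm3 hv) μ ^ t).re • (m0 - (e / norm3 hv ^ 2) • hv) +
        (-(zfac (norm3 hv) μ ^ t).im) • ((norm3 hv)⁻¹ • hv ⨯₃ m0) := by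
  ext i
  simp only [mVec, Complex.mul_re, Complex.add_re, Complex.add_im, Complex.ofReal_re,
    Complex.ofReal_im, Complex.I_re, Complex.I_im, Complex.mul_im, Complex.div_ofReal_re,
    Complex.div_ofReal_im, Pi.add_apply, Pi.smul_apply, Pi.sub_apply, smul_eq_mul]
  ring

lemma sq_re_add_sq_im_zfac_pow_le_one (h : ℝ) {μ : ℝ} (hμ : μ ∈ Set.Icc (0 : ℝ) 1) (t : ℕ) :
    (zfac h μ ^ t).re ^ 2 + (zfac h μ ^ t).im ^ 2 ≤ 1 := by
  rw [sq, sq, ← Complex.normSq_apply, Complex.normSq_eq_norm_sq, norm_pow, ← pow_mul]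
  exact pow_le_one₀ (norm_nonneg _) (norm_zfac_le_one h hμ)

lemma dotProduct_self_mVec_le (hv m0 : Fin 3 → ℝ) (hhv : hv ≠ 0) {μ : ℝ}
    (hμ : μ ∈ Set.Icc (0 : ℝ) 1) (t : ℕ) :
    mVec hv m0 (dot3 hv m0) μ t ⬝ᵥ mVec hv m0 (dot3 hv m0) μ t ≤ m0 ⬝ᵥ m0 := by
  rw [mVec_eq, norm3_sq, dot3_eq_dotProduct]
  set h := norm3 hv
  have hh : h ^ 2 = hv ⬝ᵥ hv := norm3_sq hv
  have hvv : hv ⬝ᵥ hv ≠ 0 := dotProduct_self_eq_zero.not.mpr hhv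
  have hh0 : h ≠ 0 := fun h0 => hvv (by rw [← hh, h0]; ring)
  have hmv : m0 ⬝ᵥ hv = hv ⬝ᵥ m0 := dotProduct_comm _ _
  set c := hv ⬝ᵥ m0 / hv ⬝ᵥ hv
  set p := m0 - c • hv
  set q := h⁻¹ • hv ⨯₃ m0
  have hvp : hv ⬝ᵥ p = 0 := by
    simp only [p, c, dotProduct_sub, dotProduct_smul, smul_eq_mul]
    field_simp
    ring
  have hvq : hv ⬝ᵥ q = 0 := by simp [q, dot_self_cross]
  have hpq : p ⬝ᵥ q = 0 := by
    simp [p, q, sub_dotProduct, smul_dotProduct, dot_self_cross, dot_cross_self]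
  have hqq : q ⬝ᵥ q = p ⬝ᵥ p := by
    simp only [q, p, c, smul_dotProduct, dotProduct_smul, cross_dot_cross, sub_dotProduct,
      dotProduct_sub, smul_eq_mul, hmv, ← hh]
    field_simp
    ring
  have hm0 : m0 ⬝ᵥ m0 = (c • hv) ⬝ᵥ (c • hv) + p ⬝ᵥ p := by
    simp only [p, c, smul_dotProduct, dotProduct_smul, sub_dotProduct,
      dotProduct_sub, smul_eq_mul, hmv]
    field_simp
    ring
  have hab := sq_re_add_sq_im_zfac_pow_le_one h hμ t
  have hpp : 0 ≤ p ⬝ᵥ p := by simpa using dotProduct_self_star_nonneg p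
  rw [dotProduct_self_add_smul_add_smul (by simp [hvp]) (by simp [hvq]) hpq, hm0, hqq]
  nlinarith

lemma norm3_mVec_le (hv m0 : Fin 3 → ℝ) (hhv : hv ≠ 0) {μ : ℝ} (hμ : μ ∈ Set.Icc (0 : ℝ) 1)
    (t : ℕ) : norm3 (mVec hv m0 (dot3 hv m0) μ t) ≤ norm3 m0 := by
  rw [norm3_eq_sqrt_dotProduct, norm3_eq_sqrt_dotProduct]
  exact Real.sqrt_le_sqrt (dotProduct_self_mVec_le hv m0 hhv hμ t)

/-- If `‖m⃗₀‖ ≤ 1` then for every `t`: `‖m⃗_t‖ ≤ 1`, the matrix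
`ν_t = (𝟙 + m⃗_t·σ⃗)/2` is a density matrix whose eigenvalues are `(1 ± ‖m⃗_t‖)/2`,
and its von Neumann entropy equals `s(t)`. -/
theorem kac_entropy_formula
    (hv : Fin 3 → ℝ) (hhv : hv ≠ 0) (μ : ℝ) (hμ : μ ∈ Set.Icc (0 : ℝ) 1)
    (m0 : Fin 3 → ℝ) (hm0 : norm3 m0 ≤ 1) (t : ℕ) :
    norm3 (mVec hv m0 (dot3 hv m0) μ t) ≤ 1 ∧
    (bloch (mVec hv m0 (dot3 hv m0) μ t)).PosSemidef ∧
    (bloch (mVec hv m0 (dot3 hv m0) μ t)).trace = 1 ∧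
    spectrum ℂ (bloch (mVec hv m0 (dot3 hv m0) μ t)) =
      {(((1 + norm3 (mVec hv m0 (dot3 hv m0) μ t)) / 2 : ℝ) : ℂ),
       (((1 - norm3 (mVec hv m0 (dot3 hv m0) μ t)) / 2 : ℝ) : ℂ)} ∧
    vnEntropy (bloch (mVec hv m0 (dot3 hv m0) μ t)) =
      entFun (norm3 (mVec hv m0 (dot3 hv m0) μ t)) := by
  have hmt : norm3 (mVec hv m0 (dot3 hv m0) μ t) ≤ 1 :=
    (norm3_mVec_le hv m0 hhv hμ t).trans hm0
  exact ⟨hmt, bloch_posSemidef hmt, bloch_trace _, spectrum_bloch _, vnEntropy_bloch _⟩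

end
end

section
/- (Equivalence of ensembles) Let μ ∈ [0,1], let k, N ∈ ℕ with 2k ≤ N, and let g : {0,1}^k → ℝ, regarded as a function of the first k coordinates of ε ∈ {0,1}^N. Then |E_μ^N(g) − E_μ(g)| ≤ (2^{2k+1} k / N) ‖g‖, where ‖g‖ := max_{ξ ∈ {0,1}^k} |g(ξ)|. -/
open scoped BigOperators
open Matrix Filter
open scoped ComplexOrder

noncomputable section

/-- expectation of `g : {0,1}^k → ℝ` under the product Bernoulli(μ) measure. -/
def bernAvg (k : ℕ) (μ : ℝ) (g : (Fin k → Fin 2) → ℝ) : ℝ :=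
  ∑ ξ : Fin k → Fin 2, (∏ i, if ξ i = 1 then μ else 1 - μ) * g ξ

/-!
Write `a = ξ₁ + ⋯ + ξ_k` and `M = ⌈μN⌉`. Exactly `C(N-k, M-a)` configurations of `Ω_μ^N` begin
with `ξ`, so `P_μ^N(ξ) = C(N-k, M-a) / C(N, M)`, which is the probability of drawing first `a` ones
and then `k - a` zeros without replacement from an urn with `M` ones and `N - M` zeros:
`∏_{i<a} (M-i)/(N-i) · ∏_{j<k-a} (N-M-j)/(N-a-j)`. Since `0 ≤ M - μN ≤ 1` and every denominator is
at least `N/2`, each factor lies in `[-1, 1]` and within `2k/N` of `μ` resp. `1 - μ`; telescoping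
the products gives `|P_μ^N(ξ) - μ^a (1-μ)^(k-a)| ≤ 2k²/N`. (If `a > M`, no configuration begins
with `ξ`, and `μ^a (1-μ)^(k-a) ≤ μ < k/N`.) Summing over the `2^k` words `ξ` and using `k ≤ 2^k`
gives the bound.
-/

open Finset

theorem sum_val_eq_card_filter_eq_one {α : Type*} [Fintype α] (f : α → Fin 2) :
    ∑ a, (f a : ℕ) = #{a | f a = 1} := by
  rw [card_filter]
  exact sum_congr rfl fun a _ => (by decide : ∀ v : Fin 2, (v : ℕ) = if v = 1 then 1 else 0) (f a)

theorem sum_val_le_card {α : Type*} [Fintype α] (f : α → Fin 2) :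
    ∑ a, (f a : ℕ) ≤ Fintype.card α := by
  rw [sum_val_eq_card_filter_eq_one]
  exact (card_filter_le _ _).trans_eq card_univ

theorem card_filter_sum_val_eq {α : Type*} [Fintype α] [DecidableEq α] (m : ℕ) :
    #{f : α → Fin 2 | ∑ a, (f a : ℕ) = m} = (Fintype.card α).choose m := by
  rw [← card_univ, ← card_powersetCard]
  refine card_nbij' (fun f => univ.filter (f · = 1)) (fun s a => if a ∈ s then 1 else 0)
    ?_ ?_ ?_ ?_
  · intro f hf
    simpa [mem_powersetCard, ← sum_val_eq_card_filter_eq_one] using hf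
  · intro s hs
    simpa [mem_powersetCard, sum_val_eq_card_filter_eq_one] using hs
  · intro f _
    funext a
    have := (by decide : ∀ v : Fin 2, v = 0 ∨ v = 1) (f a)
    aesop
  · intro s _
    ext a
    simp

theorem prod_ite_eq_one_eq_pow_mul_pow {α M : Type*} [Fintype α] [CommMonoid M] (f : α → Fin 2)
    (p q : M) :
    ∏ a, (if f a = 1 then p else q) =
      p ^ (∑ a, (f a : ℕ)) * q ^ (Fintype.card α - ∑ a, (f a : ℕ)) := by
  rw [prod_ite, prod_const, prod_const, sum_val_eq_card_filter_eq_one, ← card_univ,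
    ← card_filter_add_card_filter_not (s := univ) (fun a => f a = 1), Nat.add_sub_cancel_left]

theorem sum_filter_sum_val_eq_comp_castAdd {k n : ℕ} (M : ℕ) (g : (Fin k → Fin 2) → ℝ) :
    ∑ ε : Fin (k + n) → Fin 2 with ∑ j, (ε j : ℕ) = M, g (fun i => ε (Fin.castAdd n i)) =
      ∑ ξ, (#{η : Fin n → Fin 2 | ∑ i, (ξ i : ℕ) + ∑ j, (η j : ℕ) = M} : ℝ) * g ξ := by
  rw [sum_filter, ← (Fin.appendEquiv k n).sum_comp, Fintype.sum_prod_type]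
  refine sum_congr rfl fun ξ _ => ?_
  simp [Fin.sum_univ_add, sum_ite]

theorem cast_descFactorial_eq_div_factorial {K : Type*} [Field K] [CharZero K] {n b : ℕ}
    (h : b ≤ n) : (n.descFactorial b : K) = n.factorial / (n - b).factorial := by
  rw [eq_div_iff (Nat.cast_ne_zero.mpr (Nat.factorial_ne_zero _)), mul_comm]
  exact_mod_cast Nat.factorial_mul_descFactorial h

theorem cast_descFactorial_eq_prod_range {R : Type*} [CommRing R] (n b : ℕ) :
    (n.descFactorial b : R) = ∏ i ∈ range b, ((n : R) - i) := by
  rw [← descPochhammer_eval_eq_descFactorial, descPochhammer_eval_eq_prod_range]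

theorem cast_descFactorial_div_cast_descFactorial {K : Type*} [Field K] (x y b : ℕ) :
    (x.descFactorial b : K) / y.descFactorial b = ∏ i ∈ range b, ((x : K) - i) / ((y : K) - i) := by
  rw [cast_descFactorial_eq_prod_range, cast_descFactorial_eq_prod_range, prod_div_distrib]

theorem cast_choose_sub_div_choose {K : Type*} [Field K] [CharZero K] {N M k a : ℕ} (hMN : M ≤ N)
    (hkN : k ≤ N) (haM : a ≤ M) (hak : a ≤ k) :
    ((N - k).choose (M - a) : K) / N.choose M =
      M.descFactorial a * (N - M).descFactorial (k - a) /
        (N.descFactorial a * (N - a).descFactorial (k - a)) := by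
  rcases le_or_gt (k - a) (N - M) with hb | hb
  · rw [Nat.cast_choose K (by omega), Nat.cast_choose K hMN,
      cast_descFactorial_eq_div_factorial haM, cast_descFactorial_eq_div_factorial hb,
      cast_descFactorial_eq_div_factorial (hak.trans hkN),
      cast_descFactorial_eq_div_factorial (by omega : k - a ≤ N - a),
      show N - k - (M - a) = N - M - (k - a) by omega, show N - a - (k - a) = N - k by omega]
    have (m : ℕ) : (m.factorial : K) ≠ 0 := Nat.cast_ne_zero.mpr m.factorial_ne_zero
    field_simp
    exact (mul_div_mul_right _ _ (this _)).symm
  · rw [Nat.choose_eq_zero_of_lt (by omega), Nat.descFactorial_eq_zero_iff_lt.mpr hb]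
    simp

theorem norm_mul_sub_mul_le {R : Type*} [SeminormedRing R] {a b c d : R} (ha : ‖a‖ ≤ 1)
    (hd : ‖d‖ ≤ 1) : ‖a * b - c * d‖ ≤ ‖a - c‖ + ‖b - d‖ :=
  calc ‖a * b - c * d‖ = ‖a * (b - d) + (a - c) * d‖ := by noncomm_ring
    _ ≤ ‖a‖ * ‖b - d‖ + ‖a - c‖ * ‖d‖ :=
        (norm_add_le _ _).trans (add_le_add (norm_mul_le _ _) (norm_mul_le _ _))
    _ ≤ ‖a - c‖ + ‖b - d‖ := by
      rw [add_comm]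
      gcongr
      · exact mul_le_of_le_one_right (norm_nonneg _) hd
      · exact mul_le_of_le_one_left (norm_nonneg _) ha

theorem norm_prod_range_sub_pow_le {R : Type*} [NormedCommRing R] [NormOneClass R]
    {x : ℕ → R} {p : R} {δ : ℝ} {n : ℕ} (hx : ∀ i < n, ‖x i‖ ≤ 1) (hp : ‖p‖ ≤ 1)
    (hxp : ∀ i < n, ‖x i - p‖ ≤ δ) : ‖∏ i ∈ range n, x i - p ^ n‖ ≤ n * δ := by
  induction n with
  | zero => simp
  | succ n ih =>
    have hprod : ‖∏ i ∈ range n, x i‖ ≤ 1 :=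
      (Finset.norm_prod_le (range n) x).trans (prod_le_one (fun _ _ => norm_nonneg _)
        fun i hi => hx i (by rw [mem_range] at hi; omega))
    rw [prod_range_succ, pow_succ, Nat.cast_succ, add_one_mul]
    exact (norm_mul_sub_mul_le hprod hp).trans (add_le_add
      (ih (fun i hi => hx i (by omega)) (fun i hi => hxp i (by omega))) (hxp n (by omega)))

theorem abs_div_sub_le {x y p c N : ℝ} (hN : 0 < N) (hy : N ≤ 2 * y) (h : |x - p * y| ≤ c) :
    |x / y - p| ≤ 2 * c / N := by
  have hy0 : 0 < y := by linarith
  rw [show x / y - p = (x - p * y) / y by field_simp, abs_div, abs_of_pos hy0,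
    div_le_div_iff₀ hy0 hN]
  nlinarith [abs_nonneg (x - p * y)]

section SamplingWithoutReplacement

variable {μ : ℝ} {N M k : ℕ}

theorem abs_success_ratio_sub_le (hμ0 : 0 ≤ μ) (hμ1 : μ ≤ 1) (h2k : 2 * k ≤ N)
    (hlo : μ * N ≤ M) (hhi : M ≤ μ * N + 1) {i : ℕ} (hi : i < k) :
    |((M : ℝ) - i) / ((N : ℝ) - i) - μ| ≤ 2 * k / N := by
  have hir : (i : ℝ) + 1 ≤ k := by exact_mod_cast hi
  have hkN : 2 * (k : ℝ) ≤ N := by exact_mod_cast h2k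
  refine abs_div_sub_le (by linarith) (by linarith) (abs_le.mpr ⟨?_, ?_⟩) <;>
    nlinarith [(Nat.cast_nonneg i : (0 : ℝ) ≤ i)]

theorem abs_success_ratio_le_one (hMN : M ≤ N) {i : ℕ} (hiM : i ≤ M) :
    |((M : ℝ) - i) / ((N : ℝ) - i)| ≤ 1 := by
  have hiMr : (i : ℝ) ≤ M := by exact_mod_cast hiM
  have hMNr : (M : ℝ) ≤ N := by exact_mod_cast hMN
  rw [abs_div, abs_of_nonneg (by linarith), abs_of_nonneg (by linarith)]
  exact div_le_one_of_le₀ (by linarith) (by linarith)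

theorem abs_failure_ratio_sub_le (hμ0 : 0 ≤ μ) (hμ1 : μ ≤ 1) (h2k : 2 * k ≤ N)
    (hlo : μ * N ≤ M) (hhi : M ≤ μ * N + 1) {a j : ℕ} (haj : a + j < k) :
    |((N : ℝ) - M - j) / ((N : ℝ) - a - j) - (1 - μ)| ≤ 2 * k / N := by
  have hajr : (a : ℝ) + j + 1 ≤ k := by exact_mod_cast haj
  have hkN : 2 * (k : ℝ) ≤ N := by exact_mod_cast h2k
  refine abs_div_sub_le (by linarith) (by linarith) (abs_le.mpr ⟨?_, ?_⟩) <;>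
    nlinarith [(Nat.cast_nonneg j : (0 : ℝ) ≤ j), (Nat.cast_nonneg a : (0 : ℝ) ≤ a)]

theorem abs_failure_ratio_le_one (h2k : 2 * k ≤ N) (hMN : M ≤ N) {a j : ℕ} (haM : a ≤ M)
    (haj : a + j < k) : |((N : ℝ) - M - j) / ((N : ℝ) - a - j)| ≤ 1 := by
  have hajr : (a : ℝ) + j + 1 ≤ k := by exact_mod_cast haj
  have hkN : 2 * (k : ℝ) ≤ N := by exact_mod_cast h2k
  have haMr : (a : ℝ) ≤ M := by exact_mod_cast haM
  have hMNr : (M : ℝ) ≤ N := by exact_mod_cast hMN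
  have ha0 : (0 : ℝ) ≤ a := Nat.cast_nonneg a
  rw [abs_div, abs_of_pos (a := (N : ℝ) - a - j) (by linarith)]
  exact div_le_one_of_le₀ (abs_le.mpr ⟨by linarith, by linarith⟩) (by linarith)

theorem abs_choose_div_choose_sub_le (hμ0 : 0 ≤ μ) (hμ1 : μ ≤ 1) (h2k : 2 * k ≤ N)
    (hMN : M ≤ N) (hlo : μ * N ≤ M) (hhi : M ≤ μ * N + 1) {a : ℕ} (haM : a ≤ M) (hak : a ≤ k) :
    |((N - k).choose (M - a) : ℝ) / N.choose M - μ ^ a * (1 - μ) ^ (k - a)| ≤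
      k * (2 * k / N) := by
  rw [cast_choose_sub_div_choose hMN (by omega) haM hak, mul_div_mul_comm,
    cast_descFactorial_div_cast_descFactorial, cast_descFactorial_div_cast_descFactorial,
    Nat.cast_sub hMN, Nat.cast_sub (by omega : a ≤ N)]
  set success : ℕ → ℝ := fun i => ((M : ℝ) - i) / ((N : ℝ) - i)
  set failure : ℕ → ℝ := fun j => ((N : ℝ) - M - j) / ((N : ℝ) - a - j)
  have hsuccess : ‖∏ i ∈ range a, success i‖ ≤ 1 := by
    rw [Real.norm_eq_abs, abs_prod]
    exact prod_le_one (fun _ _ => abs_nonneg _)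
      fun i hi => abs_success_ratio_le_one hMN ((mem_range.mp hi).le.trans haM)
  have h1μ : ‖(1 - μ) ^ (k - a)‖ ≤ 1 := by
    rw [Real.norm_eq_abs, abs_of_nonneg (pow_nonneg (by linarith) _)]
    exact pow_le_one₀ (by linarith) (by linarith)
  have hsuccess_sub : ‖∏ i ∈ range a, success i - μ ^ a‖ ≤ a * (2 * k / N) :=
    norm_prod_range_sub_pow_le
      (fun i hi => abs_success_ratio_le_one hMN (hi.le.trans haM))
      (by rwa [Real.norm_eq_abs, abs_of_nonneg hμ0])
      (fun i hi => abs_success_ratio_sub_le hμ0 hμ1 h2k hlo hhi (hi.trans_le hak))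
  have hfailure_sub : ‖∏ j ∈ range (k - a), failure j - (1 - μ) ^ (k - a)‖ ≤
      (k - a : ℕ) * (2 * k / N) :=
    norm_prod_range_sub_pow_le
      (fun j hj => abs_failure_ratio_le_one h2k hMN haM (by omega))
      (by rw [Real.norm_eq_abs, abs_of_nonneg (by linarith)]; linarith)
      (fun j hj => abs_failure_ratio_sub_le hμ0 hμ1 h2k hlo hhi (by omega))
  calc ‖(∏ i ∈ range a, success i) * ∏ j ∈ range (k - a), failure j - μ ^ a * (1 - μ) ^ (k - a)‖
      ≤ a * (2 * k / N) + (k - a : ℕ) * (2 * k / N) :=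
        (norm_mul_sub_mul_le hsuccess h1μ).trans (add_le_add hsuccess_sub hfailure_sub)
    _ = k * (2 * k / N) := by rw [← add_mul, ← Nat.cast_add, Nat.add_sub_cancel' hak]

end SamplingWithoutReplacement

theorem abs_card_div_choose_sub_le {μ : ℝ} (hμ0 : 0 ≤ μ) (hμ1 : μ ≤ 1) {k n M a : ℕ}
    (h2k : 2 * k ≤ k + n) (hM : M ≤ k + n) (hlo : μ * (k + n : ℕ) ≤ M)
    (hhi : M ≤ μ * (k + n : ℕ) + 1) (hak : a ≤ k) :
    |(#{η : Fin n → Fin 2 | a + ∑ j, (η j : ℕ) = M} : ℝ) / (k + n).choose M -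
        μ ^ a * (1 - μ) ^ (k - a)| ≤ k * (2 * k / (k + n : ℕ)) := by
  rcases le_or_gt a M with haM | hMa
  · rw [filter_congr (q := fun η : Fin n → Fin 2 => ∑ j, (η j : ℕ) = M - a) (fun η _ => by omega),
      card_filter_sum_val_eq, Fintype.card_fin]
    simpa using abs_choose_div_choose_sub_le hμ0 hμ1 h2k hM hlo hhi haM hak
  · rw [card_eq_zero.mpr (filter_eq_empty_iff.mpr fun η _ => by omega), Nat.cast_zero, zero_div,
      zero_sub, abs_neg, abs_of_nonneg (by bound)]
    have hN : (0 : ℝ) < (k + n : ℕ) := by exact_mod_cast (by omega : 0 < k + n)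
    have hk : (1 : ℝ) ≤ k := by exact_mod_cast (by omega : 1 ≤ k)
    have hMk : (M : ℝ) + 1 ≤ k := by exact_mod_cast (by omega : M + 1 ≤ k)
    calc μ ^ a * (1 - μ) ^ (k - a) ≤ μ :=
          (mul_le_of_le_one_right (by positivity) (pow_le_one₀ (by linarith) (by linarith))).trans
            (pow_le_of_le_one hμ0 hμ1 (by omega))
      _ ≤ k / (k + n : ℕ) := by rw [le_div_iff₀ hN]; linarith
      _ ≤ k * (2 * k / (k + n : ℕ)) := by
          rw [mul_div_assoc']
          gcongr
          nlinarith

theorem epsAvg_comp_castAdd_sub_bernAvg (μ : ℝ) {k n : ℕ} (g : (Fin k → Fin 2) → ℝ) :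
    epsAvg (k + n) μ (fun ε => g (fun i => ε (Fin.castAdd n i))) - bernAvg k μ g =
      ∑ ξ, ((#{η : Fin n → Fin 2 | ∑ i, (ξ i : ℕ) + ∑ j, (η j : ℕ) = ⌈μ * (k + n : ℕ)⌉₊} : ℝ) /
          (k + n).choose ⌈μ * (k + n : ℕ)⌉₊ -
        μ ^ (∑ i, (ξ i : ℕ)) * (1 - μ) ^ (k - ∑ i, (ξ i : ℕ))) * g ξ := by
  rw [epsAvg, OmegaSet, card_filter_sum_val_eq, Fintype.card_fin,
    sum_filter_sum_val_eq_comp_castAdd, sum_div, bernAvg, ← sum_sub_distrib]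
  refine sum_congr rfl fun ξ _ => ?_
  rw [prod_ite_eq_one_eq_pow_mul_pow, Fintype.card_fin]
  ring

theorem abs_sum_mul_le_card_mul_sup' {ι : Type*} [Fintype ι] [Nonempty ι] {c g : ι → ℝ} {δ : ℝ}
    (hc : ∀ i, |c i| ≤ δ) :
    |∑ i, c i * g i| ≤ Fintype.card ι * δ * univ.sup' univ_nonempty (fun i => |g i|) := by
  calc |∑ i, c i * g i| ≤ ∑ i, |c i| * |g i| := by
        simpa only [abs_mul] using abs_sum_le_sum_abs (fun i => c i * g i) univ
    _ ≤ ∑ _i : ι, δ * univ.sup' univ_nonempty (fun i => |g i|) :=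
        sum_le_sum fun i _ => mul_le_mul (hc i) (le_sup' (fun i => |g i|) (mem_univ i))
          (abs_nonneg _) ((abs_nonneg _).trans (hc i))
    _ = _ := by rw [sum_const, card_univ, nsmul_eq_mul, mul_assoc]

/-- **equivalence of ensembles.** For `μ ∈ [0,1]`, `2k ≤ N` and
`g : {0,1}^k → ℝ` regarded as a function of the first `k` coordinates of `ε ∈ {0,1}^N`,
`|E_μ^N(g) − E_μ(g)| ≤ (2^{2k+1} k / N) ‖g‖` where `‖g‖ = max_ξ |g(ξ)|`. -/
theorem kac_equivalence_of_ensembles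
    (μ : ℝ) (hμ : μ ∈ Set.Icc (0 : ℝ) 1) (k N : ℕ) (h2k : 2 * k ≤ N)
    (g : (Fin k → Fin 2) → ℝ) :
    |epsAvg N μ (fun ε => g (fun i => ε (Fin.castLE (by omega) i))) - bernAvg k μ g| ≤
      2 ^ (2 * k + 1) * k / N *
        Finset.univ.sup' Finset.univ_nonempty (fun ξ => |g ξ|) := by
  obtain ⟨hμ0, hμ1⟩ := hμ
  obtain ⟨n, rfl⟩ := Nat.exists_eq_add_of_le (by omega : k ≤ N)
  have hM : ⌈μ * (k + n : ℕ)⌉₊ ≤ k + n :=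
    Nat.ceil_le.mpr (by nlinarith [(Nat.cast_nonneg _ : (0 : ℝ) ≤ (k + n : ℕ))])
  have hweight (ξ : Fin k → Fin 2) := abs_card_div_choose_sub_le hμ0 hμ1 h2k hM (Nat.le_ceil _)
    (Nat.ceil_lt_add_one (by positivity)).le ((sum_val_le_card ξ).trans_eq (Fintype.card_fin k))
  have hG : 0 ≤ univ.sup' univ_nonempty (fun ξ => |g ξ|) :=
    (abs_nonneg _).trans (le_sup' (fun ξ => |g ξ|) (mem_univ fun _ => 0))
  have hk : (k : ℝ) ≤ 2 ^ k := by exact_mod_cast Nat.lt_two_pow_self.le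
  refine ((epsAvg_comp_castAdd_sub_bernAvg μ g ▸ abs_sum_mul_le_card_mul_sup' hweight).trans
    (mul_le_mul_of_nonneg_right ?_ hG))
  calc ((Fintype.card (Fin k → Fin 2) : ℕ) : ℝ) * (k * (2 * k / (k + n : ℕ)))
      = 2 * 2 ^ k * k * k / (k + n : ℕ) := by
        rw [Fintype.card_fun, Fintype.card_fin, Fintype.card_fin]
        push_cast
        ring
    _ ≤ 2 * 2 ^ k * k * 2 ^ k / (k + n : ℕ) := by gcongr
    _ = 2 ^ (2 * k + 1) * k / (k + n : ℕ) := by ring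
end
end
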